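/- Let R_S > 0 and define μ₀ = (1/R_S)·[−1 + 1/(R_S·I₂(R_S)/I₁(R_S) − R_S·I₁(R_S)/I₀(R_S) + 1)]. Then μ₀ > 0. -/

import Mathlib

/-!
Write `y = r / 2`. The Cauchy product and Vandermonde's identity give
`I_p I_q = ∑ₘ C(p + q + 2m, m) y^(p + q + 2m) / ((p + m)! (q + m)!)`. Comparing coefficients of
`y^(2m + 1)` yields `r (I₀² - I₁²) - I₀ I₁ = ∑ₘ gₘ` and `I₀ I₁ = ∑ₘ (2m + 1) gₘ` with
`gₘ = C(2m, m) y^(2m + 1) / ((m + 1)!)² > 0`, hence `I₀ I₁ < r (I₀² - I₁²) < 2 I₀ I₁`.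
By the recurrence `I₂ = I₀ - (2 / r) I₁` the denominator in `μ₀` equals
`(r (I₀² - I₁²) - I₀ I₁) / (I₀ I₁)`, which therefore lies in `(0, 1)`.
-/

/-- Modified Bessel function of the first kind of integer order. -/
noncomputable def besselI (n : ℕ) (r : ℝ) : ℝ :=
  ∑' k : ℕ, (r / 2) ^ (n + 2 * k) / ((Nat.factorial k : ℝ) * (Nat.factorial (n + k) : ℝ))

open scoped Nat
open Finset

noncomputable def besselTerm (n : ℕ) (y : ℝ) (k : ℕ) : ℝ :=
  y ^ (n + 2 * k) / ((k ! : ℝ) * ((n + k)! : ℝ))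

lemma besselI_eq_tsum (n : ℕ) (r : ℝ) : besselI n r = ∑' k, besselTerm n (r / 2) k := rfl

lemma summable_norm_besselTerm (n : ℕ) (y : ℝ) : Summable fun k => ‖besselTerm n y k‖ := by
  refine Summable.of_nonneg_of_le (fun _ => norm_nonneg _) (fun k => ?_)
    ((Real.summable_pow_div_factorial (y ^ 2)).mul_left (|y| ^ n))
  rw [besselTerm, norm_div, norm_pow, Real.norm_eq_abs, pow_add, pow_mul, ← mul_div_assoc,
    sq_abs, Real.norm_of_nonneg (by positivity)]
  gcongr
  exact le_mul_of_one_le_right (by positivity) (mod_cast (n + k).factorial_pos)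

lemma hasSum_besselI (n : ℕ) (r : ℝ) : HasSum (besselTerm n (r / 2)) (besselI n r) :=
  (summable_norm_besselTerm n _).of_norm.hasSum

lemma besselI_pos (n : ℕ) {r : ℝ} (hr : 0 < r) : 0 < besselI n r := by
  have hterm : ∀ k, 0 < besselTerm n (r / 2) k := fun k => by unfold besselTerm; positivity
  exact (summable_norm_besselTerm n _).of_norm.tsum_pos (fun k => (hterm k).le) 0 (hterm 0)

lemma besselTerm_succ (n : ℕ) {y : ℝ} (hy : y ≠ 0) (k : ℕ) :
    besselTerm n y (k + 1) =
      (n + 1) / y * besselTerm (n + 1) y (k + 1) + besselTerm (n + 2) y k := by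
  unfold besselTerm
  rw [show n + (k + 1) = n + k + 1 by ring, show n + 1 + (k + 1) = n + k + 1 + 1 by ring,
    show n + 2 + k = n + k + 1 + 1 by ring]
  simp only [Nat.factorial_succ]
  push_cast
  field_simp
  ring

theorem besselI_sub_besselI_add_two (n : ℕ) {r : ℝ} (hr : r ≠ 0) :
    besselI n r - besselI (n + 2) r = 2 * (n + 1) / r * besselI (n + 1) r := by
  have hy : r / 2 ≠ 0 := div_ne_zero hr two_ne_zero
  have h0 : besselTerm n (r / 2) 0 = (n + 1) / (r / 2) * besselTerm (n + 1) (r / 2) 0 := by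
    simp only [besselTerm, mul_zero, add_zero, Nat.factorial_succ]
    push_cast
    field_simp
    ring
  have hn := (hasSum_nat_add_iff' 1).2 (hasSum_besselI n r)
  have hn1 := ((hasSum_nat_add_iff' 1).2 (hasSum_besselI (n + 1) r)).mul_left ((n + 1) / (r / 2))
  simp only [range_one, sum_singleton] at hn hn1
  have hshift := (hn1.add (hasSum_besselI (n + 2) r)).congr_fun (besselTerm_succ n hy)
  rw [show 2 * ((n : ℝ) + 1) / r = (n + 1) / (r / 2) by field_simp]
  linear_combination h0 - hshift.unique hn

lemma besselTerm_mul_besselTerm (p q : ℕ) (y : ℝ) {k l m : ℕ} (h : k + l = m) :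
    besselTerm p y k * besselTerm q y l =
      y ^ (p + q + 2 * m) * ((q + m).choose k * (p + m).choose l : ℕ)
        / ((p + m)! * (q + m)!) := by
  subst h
  have hq := Nat.cast_add_choose ℝ (a := k) (b := q + l)
  have hp := Nat.cast_add_choose ℝ (a := l) (b := p + k)
  rw [show k + (q + l) = q + (k + l) by ring] at hq
  rw [show l + (p + k) = p + (k + l) by ring] at hp
  rw [besselTerm, besselTerm, Nat.cast_mul, hq, hp]
  field_simp
  ring

theorem hasSum_besselI_mul_besselI (p q : ℕ) (r : ℝ) :
    HasSum (fun m => (r / 2) ^ (p + q + 2 * m) * ((p + q + 2 * m).choose m : ℝ)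
      / ((p + m)! * (q + m)!)) (besselI p r * besselI q r) := by
  have hp := summable_norm_besselTerm p (r / 2)
  have hq := summable_norm_besselTerm q (r / 2)
  rw [besselI_eq_tsum, besselI_eq_tsum,
    tsum_mul_tsum_eq_tsum_sum_antidiagonal_of_summable_norm hp hq]
  refine (summable_norm_sum_mul_antidiagonal_of_summable_norm hp hq).of_norm.hasSum.congr_fun
    fun m => ?_
  rw [sum_congr rfl fun kl hkl => besselTerm_mul_besselTerm p q _ (mem_antidiagonal.1 hkl),
    ← sum_div, ← mul_sum, ← Nat.cast_sum, ← Nat.add_choose_eq]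
  congr 4
  ring

lemma choose_two_mul_succ_mul (m : ℕ) :
    (2 * m).choose (m + 1) * (m + 1) = (2 * m).choose m * m := by
  simpa [two_mul] using Nat.choose_succ_right_eq (2 * m) m

lemma choose_two_mul_add_one_mul (m : ℕ) :
    (2 * m + 1).choose m * (m + 1) = (2 * m + 1) * (2 * m).choose m := by
  rw [Nat.add_one_mul_choose_eq, Nat.choose_symm_half]

noncomputable def besselGapTerm (y : ℝ) (m : ℕ) : ℝ :=
  y ^ (2 * m + 1) * (2 * m).choose m / ((m + 1)! : ℝ) ^ 2

lemma hasSum_besselI_zero_mul_besselI_one (r : ℝ) :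
    HasSum (fun m => (2 * m + 1) * besselGapTerm (r / 2) m) (besselI 0 r * besselI 1 r) := by
  refine (hasSum_besselI_mul_besselI 0 1 r).congr_fun fun m => ?_
  have h := choose_two_mul_add_one_mul m
  rw [← @Nat.cast_inj ℝ] at h
  push_cast at h
  rw [besselGapTerm, show 0 + 1 + 2 * m = 2 * m + 1 by ring, zero_add, add_comm 1 m,
    Nat.factorial_succ, eq_div_of_mul_eq (by positivity) h]
  push_cast
  field_simp

/-- The `m = 0` term vanishes: this is the product series of `I₁ I₁` shifted by one. -/
lemma hasSum_mul_besselI_one_mul_self (r : ℝ) :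
    HasSum (fun m => 2 * (r / 2) ^ (2 * m + 1) * (2 * m).choose (m + 1) / ((m ! : ℝ) * m !))
      (r * (besselI 1 r * besselI 1 r)) := by
  refine (hasSum_nat_add_iff' 1).1 ?_
  simp only [range_one, sum_singleton, mul_zero, zero_add, Nat.choose_zero_succ, Nat.cast_zero,
    mul_zero, zero_div, sub_zero]
  refine ((hasSum_besselI_mul_besselI 1 1 r).mul_left r).congr_fun fun m => ?_
  rw [Nat.choose_symm_of_eq_add (show 2 * (m + 1) = m + 1 + 1 + m by ring),
    show 2 * (m + 1) = 1 + 1 + 2 * m by ring, add_comm 1 m]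
  field_simp
  ring

theorem hasSum_besselGapTerm (r : ℝ) :
    HasSum (besselGapTerm (r / 2))
      (r * (besselI 0 r ^ 2 - besselI 1 r ^ 2) - besselI 0 r * besselI 1 r) := by
  have h00 := (hasSum_besselI_mul_besselI 0 0 r).mul_left r
  have h01 := hasSum_besselI_zero_mul_besselI_one r
  rw [sq, sq, mul_sub]
  refine ((h00.sub (hasSum_mul_besselI_one_mul_self r)).sub h01).congr_fun fun m => ?_
  have h := choose_two_mul_succ_mul m
  rw [← @Nat.cast_inj ℝ] at h
  push_cast at h
  rw [besselGapTerm, eq_div_of_mul_eq (by positivity) h, Nat.factorial_succ]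
  simp only [zero_add]
  push_cast
  field_simp
  ring

lemma besselGapTerm_pos {y : ℝ} (hy : 0 < y) (m : ℕ) : 0 < besselGapTerm y m := by
  have := Nat.choose_pos (Nat.le_mul_of_pos_left m two_pos)
  unfold besselGapTerm
  positivity

theorem besselI_zero_mul_besselI_one_lt {r : ℝ} (hr : 0 < r) :
    besselI 0 r * besselI 1 r < r * (besselI 0 r ^ 2 - besselI 1 r ^ 2) := by
  have hgap := besselGapTerm_pos (half_pos hr)
  have := hasSum_lt (fun m => (hgap m).le) (hgap 0) hasSum_zero (hasSum_besselGapTerm r)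
  linarith

theorem mul_besselI_sq_sub_sq_lt {r : ℝ} (hr : 0 < r) :
    r * (besselI 0 r ^ 2 - besselI 1 r ^ 2) < 2 * (besselI 0 r * besselI 1 r) := by
  have hgap := besselGapTerm_pos (half_pos hr)
  have hle : ∀ m : ℕ, besselGapTerm (r / 2) m ≤ (2 * m + 1) * besselGapTerm (r / 2) m :=
    fun m => le_mul_of_one_le_left (hgap m).le (by linarith [m.cast_nonneg (α := ℝ)])
  have := hasSum_lt (i := 1) hle (by norm_num; linarith [hgap 1]) (hasSum_besselGapTerm r)
    (hasSum_besselI_zero_mul_besselI_one r)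
  linarith

theorem mu_zero_pos (R_S : ℝ) (hR : 0 < R_S) :
    (1 / R_S) * (-1 + 1 / (R_S * besselI 2 R_S / besselI 1 R_S
      - R_S * besselI 1 R_S / besselI 0 R_S + 1)) > 0 := by
  have h0 := besselI_pos 0 hR
  have h1 := besselI_pos 1 hR
  have h01 := mul_pos h0 h1
  have hI2 : besselI 2 R_S = besselI 0 R_S - 2 / R_S * besselI 1 R_S := by
    linarith [besselI_sub_besselI_add_two 0 hR.ne']
  set A := R_S * besselI 2 R_S / besselI 1 R_S - R_S * besselI 1 R_S / besselI 0 R_S + 1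
    with hAdef
  have hA : A = (R_S * (besselI 0 R_S ^ 2 - besselI 1 R_S ^ 2) - besselI 0 R_S * besselI 1 R_S)
      / (besselI 0 R_S * besselI 1 R_S) := by
    rw [hAdef, hI2]
    field_simp
    ring
  have hA0 : 0 < A := hA ▸ div_pos (sub_pos.2 (besselI_zero_mul_besselI_one_lt hR)) h01
  have hA1 : A < 1 := hA ▸ (div_lt_one h01).2 (by linarith [mul_besselI_sq_sub_sq_lt hR])
  exact mul_pos (one_div_pos.2 hR) (by linarith [one_lt_one_div hA0 hA1])
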